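/- One-step descent inequality for the 2-convex, Hilbert-data case: let X be a real Banach space, Y a real Hilbert space, σ > 0, and θ : X → ℝ 2-convex with constant σ. Let x0 ∈ X, ρ > 0, and let F : X → Y be Fréchet differentiable on B_{2ρ}(x0) satisfying the tangential cone condition with constant η ∈ [0,1). Let x̂ ∈ B_{2ρ}(x0) with F(x̂) = y and ‖y^δ − y‖ ≤ δ. Suppose x ∈ B_{2ρ}(x0), ξ ∈ ∂θ(x), set g := F'(x)*(F(x) − y^δ) ∈ X*, and let t ≥ 0 satisfy t ‖g‖² ≤ μ0 ‖F(x) − y^δ‖² for some μ0 > 0. Let ξ' := ξ − t g and let x' be a minimizer of z ↦ θ(z) − ⟨ξ', z⟩ over X. Then D_{ξ'}θ(x̂, x') − D_ξθ(x̂, x) ≤ −(1 − η − μ0/(4σ)) t ‖F(x) − y^δ‖² + (1 + η) t ‖F(x) − y^δ‖ δ. -/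

import Mathlib

/-!
Expanding both Bregman distances, their difference is `-D_ξθ(x', x) + t g(x̂ - x) - t g(x' - x)`.
Strong convexity bounds `D_ξθ(x', x)` below by `σ ‖x' - x‖²`, so the first and last terms together
are at most `(t ‖g‖)² / (4σ) ≤ μ0 t ‖F x - yδ‖² / (4σ)` by completing the square. The middle term is
`t ⟪F x - yδ, F'(x)(x̂ - x)⟫`, and the tangential cone condition says that `F'(x)(x̂ - x)` is within
`η ‖y - F x‖` of `y - F x`, which gives the remaining `-(1 - η) ‖F x - yδ‖² + (1 + η) ‖F x - yδ‖ δ`.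
-/

open Filter Topology

section Bregman

variable {X : Type*} [NormedAddCommGroup X] [NormedSpace ℝ X]

def bregmanDist (θ : X → ℝ) (ξ : X →L[ℝ] ℝ) (u v : X) : ℝ :=
  θ u - θ v - ξ (u - v)

lemma bregmanDist_sub_smul_sub (θ : X → ℝ) (ξ g : X →L[ℝ] ℝ) (t : ℝ) (u v v' : X) :
    bregmanDist θ (ξ - t • g) u v' - bregmanDist θ ξ u v
      = -bregmanDist θ ξ v' v + t * g (u - v) - t * g (v' - v) := by
  have hu : u - v' = (u - v) - (v' - v) := by abel
  simp only [bregmanDist, sub_apply, smul_apply, smul_eq_mul, hu, map_sub]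
  ring

/-- The modulus of uniform convexity bounds the Bregman distance from below: compare `θ` with its
supporting hyperplane at `x` along the segment from `x` to `u`, and let the step tend to `0`. -/
lemma UniformConvexOn.le_bregmanDist {s : Set X} {φ : ℝ → ℝ} {θ : X → ℝ}
    (hθ : UniformConvexOn s φ θ) {x u : X} (hx : x ∈ s) (hu : u ∈ s) {ξ : X →L[ℝ] ℝ}
    (hξ : ∀ z ∈ s, θ x + ξ (z - x) ≤ θ z) :
    φ ‖u - x‖ ≤ bregmanDist θ ξ u x := by
  have hstep : ∀ r ∈ Set.Ioo (0 : ℝ) 1, (1 - r) * φ ‖u - x‖ ≤ bregmanDist θ ξ u x := by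
    rintro r ⟨hr0, hr1⟩
    have hconv := hθ.2 hu hx hr0.le (sub_nonneg.2 hr1.le) (add_sub_cancel r 1)
    have hsupp := hξ _ (hθ.1 hu hx hr0.le (sub_nonneg.2 hr1.le) (add_sub_cancel r 1))
    have hlin : ξ (r • u + (1 - r) • x - x) = r * ξ (u - x) := by
      rw [show r • u + (1 - r) • x - x = r • (u - x) by module, map_smul, smul_eq_mul]
    rw [hlin] at hsupp
    simp only [smul_eq_mul] at hconv
    have hscaled : r * ((1 - r) * φ ‖u - x‖) ≤ r * bregmanDist θ ξ u x := by
      unfold bregmanDist; nlinarith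
    exact le_of_mul_le_mul_left hscaled hr0
  have hlim : Tendsto (fun r : ℝ ↦ (1 - r) * φ ‖u - x‖) (𝓝[>] 0) (𝓝 (φ ‖u - x‖)) := by
    have : Continuous (fun r : ℝ ↦ (1 - r) * φ ‖u - x‖) := by fun_prop
    simpa using (this.tendsto 0).mono_left nhdsWithin_le_nhds
  exact le_of_tendsto hlim (eventually_of_mem (Ioo_mem_nhdsGT one_pos) hstep)

end Bregman

lemma mul_sub_mul_sq_le_sq_div {σ : ℝ} (hσ : 0 < σ) (a c : ℝ) :
    a * c - σ * c ^ 2 ≤ a ^ 2 / (4 * σ) := by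
  rw [le_div_iff₀ (by positivity)]
  nlinarith [sq_nonneg (a - 2 * σ * c)]

/-- Here `b` is the exact data `F x̂`, `c` the noisy data `yδ`, `a = F x` and `v = F'(x)(x̂ - x)`. -/
lemma inner_le_of_tangential_cone {Y : Type*} [NormedAddCommGroup Y] [InnerProductSpace ℝ Y]
    {a b c v : Y} {η δ : ℝ} (hη : 0 ≤ η) (hv : ‖b - a - v‖ ≤ η * ‖b - a‖) (hc : ‖c - b‖ ≤ δ) :
    inner ℝ (a - c) v ≤ -(1 - η) * ‖a - c‖ ^ 2 + (1 + η) * ‖a - c‖ * δ := by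
  have hba : ‖b - a‖ ≤ ‖a - c‖ + δ := by
    calc ‖b - a‖ = ‖(a - c) + (c - b)‖ := by rw [← norm_neg]; congr 1; abel
      _ ≤ ‖a - c‖ + δ := (norm_add_le _ _).trans (by gcongr)
  have hsplit : inner ℝ (a - c) v
      = -‖a - c‖ ^ 2 - inner ℝ (a - c) (c - b) - inner ℝ (a - c) (b - a - v) := by
    rw [← real_inner_self_eq_norm_sq, ← inner_neg_right, ← inner_sub_right, ← inner_sub_right]
    congr 1; abel
  have hdata : -inner ℝ (a - c) (c - b) ≤ ‖a - c‖ * δ :=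
    (neg_le_abs _).trans ((abs_real_inner_le_norm _ _).trans (by gcongr))
  have hcone : -inner ℝ (a - c) (b - a - v) ≤ ‖a - c‖ * (η * (‖a - c‖ + δ)) :=
    (neg_le_abs _).trans ((abs_real_inner_le_norm _ _).trans
      (by gcongr; exact hv.trans (by gcongr)))
  rw [hsplit]
  nlinarith

theorem sgd_one_step_descent_two_convex_general
    {X : Type*} [NormedAddCommGroup X] [NormedSpace ℝ X]
    {Y : Type*} [NormedAddCommGroup Y] [InnerProductSpace ℝ Y]
    (σ : ℝ) (hσ : 0 < σ) (θ : X → ℝ)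
    (hθ : ∀ u v : X, ∀ s : ℝ, s ∈ Set.Icc (0:ℝ) 1 →
      θ (s • u + (1 - s) • v) + σ * s * (1 - s) * ‖u - v‖ ^ 2
        ≤ s * θ u + (1 - s) * θ v)
    (x0 : X) (ρ : ℝ)
    (F : X → Y) (F' : X → (X →L[ℝ] Y))
    (η : ℝ) (hη0 : 0 ≤ η)
    (hTCC : ∀ u ∈ Metric.closedBall x0 (2 * ρ), ∀ v ∈ Metric.closedBall x0 (2 * ρ),
      ‖F u - F v - F' v (u - v)‖ ≤ η * ‖F u - F v‖)
    (xhat : X) (hxhat : xhat ∈ Metric.closedBall x0 (2 * ρ))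
    (y : Y) (hsol : F xhat = y)
    (yδ : Y) (δ : ℝ) (hnoise : ‖yδ - y‖ ≤ δ)
    (μ0 : ℝ)
    (x : X) (hx : x ∈ Metric.closedBall x0 (2 * ρ))
    (ξ : X →L[ℝ] ℝ) (hξ : ∀ z : X, θ x + ξ (z - x) ≤ θ z)
    (g : X →L[ℝ] ℝ) (hg : ∀ v : X, g v = (inner ℝ (F x - yδ) (F' x v) : ℝ))
    (t : ℝ) (ht0 : 0 ≤ t)
    (ht : t * ‖g‖ ^ 2 ≤ μ0 * ‖F x - yδ‖ ^ 2)
    (ξ' : X →L[ℝ] ℝ) (hξ' : ξ' = ξ - t • g)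
    (x' : X) :
    (θ xhat - θ x' - ξ' (xhat - x')) - (θ xhat - θ x - ξ (xhat - x))
      ≤ -(1 - η - μ0 / (4 * σ)) * t * ‖F x - yδ‖ ^ 2
        + (1 + η) * t * ‖F x - yδ‖ * δ := by
  subst hsol hξ'
  have hθσ : UniformConvexOn Set.univ (fun r ↦ σ * r ^ 2) θ := by
    refine ⟨convex_univ, fun u _ v _ a b ha hb hab ↦ ?_⟩
    obtain rfl : b = 1 - a := by linarith
    have := hθ u v a ⟨ha, by linarith⟩
    simp only [smul_eq_mul]
    linarith
  have hstrong : σ * ‖x' - x‖ ^ 2 ≤ bregmanDist θ ξ x' x :=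
    hθσ.le_bregmanDist trivial trivial fun z _ ↦ hξ z
  have hdescent : g (xhat - x) ≤ -(1 - η) * ‖F x - yδ‖ ^ 2 + (1 + η) * ‖F x - yδ‖ * δ := by
    rw [hg]; exact inner_le_of_tangential_cone hη0 (hTCC xhat hxhat x hx) hnoise
  have hdir : -g (x' - x) ≤ ‖g‖ * ‖x' - x‖ := (neg_le_abs _).trans (g.le_opNorm _)
  have hsquare : t * ‖g‖ * ‖x' - x‖ - σ * ‖x' - x‖ ^ 2 ≤ μ0 / (4 * σ) * t * ‖F x - yδ‖ ^ 2 :=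
    calc _ ≤ (t * ‖g‖) ^ 2 / (4 * σ) := mul_sub_mul_sq_le_sq_div hσ _ _
      _ = t * (t * ‖g‖ ^ 2) / (4 * σ) := by ring
      _ ≤ t * (μ0 * ‖F x - yδ‖ ^ 2) / (4 * σ) := by gcongr
      _ = μ0 / (4 * σ) * t * ‖F x - yδ‖ ^ 2 := by ring
  change bregmanDist θ (ξ - t • g) xhat x' - bregmanDist θ ξ xhat x ≤ _
  rw [bregmanDist_sub_smul_sub]
  nlinarith [mul_le_mul_of_nonneg_left hdescent ht0, mul_le_mul_of_nonneg_left hdir ht0]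

/-- One-step descent inequality for the 2-convex, Hilbert-data case:
with `θ` 2-convex with constant `σ`, `F` Fréchet differentiable on `B_{2ρ}(x0)` satisfying the
tangential cone condition with constant `η ∈ [0,1)`, `xhat ∈ B_{2ρ}(x0)` solving `F(xhat) = y`,
`‖yδ − y‖ ≤ δ`, `x ∈ B_{2ρ}(x0)`, `ξ ∈ ∂θ(x)`, `g = F'(x)*(F(x) − yδ)`, `t ≥ 0` with
`t ‖g‖² ≤ μ0 ‖F(x) − yδ‖²`, `ξ' = ξ − t g` and `x'` a minimizer of `z ↦ θ(z) − ⟨ξ', z⟩`: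
`D_{ξ'}θ(xhat, x') − D_ξθ(xhat, x)
  ≤ −(1 − η − μ0/(4σ)) t ‖F(x) − yδ‖² + (1+η) t ‖F(x) − yδ‖ δ`. -/
theorem sgd_one_step_descent_two_convex
    {X : Type*} [NormedAddCommGroup X] [NormedSpace ℝ X] [CompleteSpace X]
    {Y : Type*} [NormedAddCommGroup Y] [InnerProductSpace ℝ Y] [CompleteSpace Y]
    (σ : ℝ) (hσ : 0 < σ) (θ : X → ℝ)
    (hθ : ∀ u v : X, ∀ s : ℝ, s ∈ Set.Icc (0:ℝ) 1 →
      θ (s • u + (1 - s) • v) + σ * s * (1 - s) * ‖u - v‖ ^ 2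
        ≤ s * θ u + (1 - s) * θ v)
    (x0 : X) (ρ : ℝ) (hρ : 0 < ρ)
    (F : X → Y) (F' : X → (X →L[ℝ] Y))
    (hF : ∀ z ∈ Metric.closedBall x0 (2 * ρ), HasFDerivAt F (F' z) z)
    (η : ℝ) (hη0 : 0 ≤ η) (hη1 : η < 1)
    (hTCC : ∀ u ∈ Metric.closedBall x0 (2 * ρ), ∀ v ∈ Metric.closedBall x0 (2 * ρ),
      ‖F u - F v - F' v (u - v)‖ ≤ η * ‖F u - F v‖)
    (xhat : X) (hxhat : xhat ∈ Metric.closedBall x0 (2 * ρ))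
    (y : Y) (hsol : F xhat = y)
    (yδ : Y) (δ : ℝ) (hnoise : ‖yδ - y‖ ≤ δ)
    (μ0 : ℝ) (hμ0 : 0 < μ0)
    (x : X) (hx : x ∈ Metric.closedBall x0 (2 * ρ))
    (ξ : X →L[ℝ] ℝ) (hξ : ∀ z : X, θ x + ξ (z - x) ≤ θ z)
    (g : X →L[ℝ] ℝ) (hg : ∀ v : X, g v = (inner ℝ (F x - yδ) (F' x v) : ℝ))
    (t : ℝ) (ht0 : 0 ≤ t)
    (ht : t * ‖g‖ ^ 2 ≤ μ0 * ‖F x - yδ‖ ^ 2)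
    (ξ' : X →L[ℝ] ℝ) (hξ' : ξ' = ξ - t • g)
    (x' : X) (hx' : ∀ z : X, θ x' - ξ' x' ≤ θ z - ξ' z) :
    (θ xhat - θ x' - ξ' (xhat - x')) - (θ xhat - θ x - ξ (xhat - x))
      ≤ -(1 - η - μ0 / (4 * σ)) * t * ‖F x - yδ‖ ^ 2
        + (1 + η) * t * ‖F x - yδ‖ * δ :=
  sgd_one_step_descent_two_convex_general σ hσ θ hθ x0 ρ F F' η hη0 hTCC xhat hxhat y hsol yδ δ
    hnoise μ0 x hx ξ hξ g hg t ht0 ht ξ' hξ' x'
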